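/- Let C be a ZMod p-submodule of (Fin k → ZMod p) and let σ be a permutation of Ω with σ * H_C * σ⁻¹ = H_C. Let I and J be finite sets of indices in Fin k such that σ maps the union of the i-th fibers over i ∈ I onto the union of the j-th fibers over j ∈ J. Then the dimension of the image of C under the restriction map (Fin k → ZMod p) → (I → ZMod p), v ↦ v restricted to I, equals the dimension of the image of C under the restriction map to J. -/

import Mathlib

def gperm {p k : ℕ} (v : Fin k → ZMod p) : Equiv.Perm (Fin k × ZMod p) :=
  Equiv.prodShear (Equiv.refl (Fin k)) (fun i => Equiv.addRight (v i))

def Hsub {p k : ℕ} (C : Submodule (ZMod p) (Fin k → ZMod p)) :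
    Subgroup (Equiv.Perm (Fin k × ZMod p)) where
  carrier := {g | ∃ v ∈ C, g = gperm v}
  one_mem' := ⟨0, C.zero_mem, by ext ⟨i, x⟩ <;> simp [gperm]⟩
  mul_mem' := by
    rintro g h ⟨v, hv, rfl⟩ ⟨w, hw, rfl⟩
    refine ⟨v + w, C.add_mem hv hw, ?_⟩
    ext ⟨i, x⟩ <;> simp [gperm] <;> ring
  inv_mem' := by
    rintro g ⟨v, hv, rfl⟩
    refine ⟨-v, C.neg_mem hv, ?_⟩
    have h1 : gperm v * gperm (-v) = 1 := by ext ⟨i, x⟩ <;> simp [gperm]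
    exact inv_eq_of_mul_eq_one_right h1

def affineEquiv {p : ℕ} (a : (ZMod p)ˣ) (b : ZMod p) : Equiv.Perm (ZMod p) where
  toFun x := (a : ZMod p) * x + b
  invFun y := ((a⁻¹ : (ZMod p)ˣ) : ZMod p) * (y - b)
  left_inv x := by simp
  right_inv y := by simp

def sigmaPerm {p k : ℕ} (a : Fin k → (ZMod p)ˣ) (b : Fin k → ZMod p)
    (π : Equiv.Perm (Fin k)) : Equiv.Perm (Fin k × ZMod p) :=
  Equiv.prodShear π (fun i => affineEquiv (a i) (b i))

/-!
Conjugation by `σ` preserves `H_C` and carries the pointwise stabiliser of the fibres over `I`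
onto that of the fibres over `J`, so the two stabilisers inside `H_C` have the same size. Under
`v ↦ g_v` these stabilisers are the kernels of the restriction maps `C → (I → ZMod p)` and
`C → (J → ZMod p)`; kernels of equal size over `ZMod p` have equal dimension, and rank–nullity
transfers this to the images.
-/

open Equiv Pointwise

lemma Subgroup.map_conj_eq_of_image_eq {G : Type*} [Group G] {H : Subgroup G} {σ : G}
    (hσ : (fun g => σ * g * σ⁻¹) '' (H : Set G) = H) :
    H.map (MulAut.conj σ).toMonoidHom = H :=
  SetLike.coe_injective (by rw [Subgroup.coe_map]; exact hσ)

lemma Subgroup.natCard_inf_fixingSubgroup_image {α : Type*} {H : Subgroup (Perm α)} {σ : Perm α}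
    (hσ : H.map (MulAut.conj σ).toMonoidHom = H) (S : Set α) :
    Nat.card ↥(H ⊓ fixingSubgroup (Perm α) (σ '' S)) =
      Nat.card ↥(H ⊓ fixingSubgroup (Perm α) S) := by
  have hS : σ • S = σ '' S := Set.image_smul.symm
  rw [← SubMulAction.fixingSubgroup_map_conj_eq hS, ← hσ,
    ← Subgroup.map_inf_eq _ _ _ (MulAut.conj σ).injective, hσ,
    Subgroup.card_map_of_injective (MulAut.conj σ).injective]

lemma Module.finrank_eq_of_natCard_eq {K V W : Type*} [Field K] [Finite K]
    [AddCommGroup V] [Module K V] [Module.Finite K V]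
    [AddCommGroup W] [Module K W] [Module.Finite K W] (h : Nat.card V = Nat.card W) :
    Module.finrank K V = Module.finrank K W := by
  rw [Module.natCard_eq_pow_finrank (K := K) (V := V),
    Module.natCard_eq_pow_finrank (K := K) (V := W)] at h
  exact Nat.pow_right_injective Finite.one_lt_card h

lemma Submodule.finrank_map_add_finrank_ker_domRestrict {K V W : Type*} [Field K]
    [AddCommGroup V] [Module K V] [AddCommGroup W] [Module K W]
    (C : Submodule K V) [FiniteDimensional K C] (f : V →ₗ[K] W) :
    Module.finrank K (C.map f) + Module.finrank K (LinearMap.ker (f.domRestrict C)) =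
      Module.finrank K C := by
  rw [← LinearMap.range_domRestrict]
  exact LinearMap.finrank_range_add_finrank_ker _

lemma LinearMap.funLeft_subtype_val_eq_zero_iff {R M ι : Type*} [Semiring R] [AddCommMonoid M]
    [Module R M] {P : ι → Prop} {v : ι → M} :
    LinearMap.funLeft R M (Subtype.val : Subtype P → ι) v = 0 ↔ ∀ i, P i → v i = 0 := by
  simp [funext_iff, LinearMap.funLeft_apply]

section Shifts

variable {p k : ℕ}

lemma gperm_injective : Function.Injective (gperm (p := p) (k := k)) := by
  intro v w h
  funext i
  simpa [gperm] using congrArg (fun g : Perm (Fin k × ZMod p) => (g (i, 0)).2) h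

lemma gperm_mem_fixingSubgroup_iff {v : Fin k → ZMod p} {I : Set (Fin k)} :
    gperm v ∈ fixingSubgroup (Perm (Fin k × ZMod p)) {ω : Fin k × ZMod p | ω.1 ∈ I} ↔
      ∀ i ∈ I, v i = 0 := by
  simp [mem_fixingSubgroup_iff, Perm.smul_def, gperm]

lemma natCard_ker_domRestrict_funLeft (C : Submodule (ZMod p) (Fin k → ZMod p))
    (I : Finset (Fin k)) :
    Nat.card (LinearMap.ker
        ((LinearMap.funLeft (ZMod p) (ZMod p) (fun i : {x // x ∈ I} => (i : Fin k))).domRestrict C))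
      = Nat.card ↥(Hsub C ⊓
          fixingSubgroup (Perm (Fin k × ZMod p)) {ω : Fin k × ZMod p | ω.1 ∈ I}) := by
  refine Nat.card_congr (Equiv.ofBijective
    (fun x => ⟨gperm x.1.1, ⟨x.1.1, x.1.2, rfl⟩, gperm_mem_fixingSubgroup_iff.2 ?_⟩) ⟨?_, ?_⟩)
  · exact (LinearMap.funLeft_subtype_val_eq_zero_iff (R := ZMod p)).1 x.2
  · intro x y h
    exact Subtype.ext (Subtype.ext (gperm_injective (congrArg Subtype.val h)))
  · rintro ⟨g, ⟨v, hv, rfl⟩, hg⟩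
    refine ⟨⟨⟨v, hv⟩, ?_⟩, rfl⟩
    exact (LinearMap.funLeft_subtype_val_eq_zero_iff (R := ZMod p)).2
      (gperm_mem_fixingSubgroup_iff.1 hg)

end Shifts

/-- If `σ` normalizes `H_C` and maps the union of the fibers over `I` onto the union of
the fibers over `J`, then the restrictions of `C` to `I` and to `J` have the same
dimension. -/
theorem stmt11 {p k : ℕ} (hp : p.Prime)
    (C : Submodule (ZMod p) (Fin k → ZMod p))
    (σ : Equiv.Perm (Fin k × ZMod p))
    (hσ : (fun g => σ * g * σ⁻¹) '' (Hsub C : Set (Equiv.Perm (Fin k × ZMod p)))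
        = (Hsub C : Set (Equiv.Perm (Fin k × ZMod p))))
    (I J : Finset (Fin k))
    (hIJ : ⇑σ '' {ω : Fin k × ZMod p | ω.1 ∈ I} = {ω : Fin k × ZMod p | ω.1 ∈ J}) :
    Module.finrank (ZMod p)
        (C.map (LinearMap.funLeft (ZMod p) (ZMod p) (fun i : {x // x ∈ I} => (i : Fin k))))
      = Module.finrank (ZMod p)
        (C.map (LinearMap.funLeft (ZMod p) (ZMod p) (fun j : {x // x ∈ J} => (j : Fin k)))) := by
  have : Fact p.Prime := ⟨hp⟩
  set fI := LinearMap.funLeft (ZMod p) (ZMod p) (fun i : {x // x ∈ I} => (i : Fin k))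
  set fJ := LinearMap.funLeft (ZMod p) (ZMod p) (fun j : {x // x ∈ J} => (j : Fin k))
  have hker : Module.finrank (ZMod p) (LinearMap.ker (fI.domRestrict C)) =
      Module.finrank (ZMod p) (LinearMap.ker (fJ.domRestrict C)) := by
    refine Module.finrank_eq_of_natCard_eq ?_
    calc Nat.card (LinearMap.ker (fI.domRestrict C))
        = Nat.card ↥(Hsub C ⊓ fixingSubgroup (Perm _) {ω : Fin k × ZMod p | ω.1 ∈ I}) :=
          natCard_ker_domRestrict_funLeft C I
      _ = Nat.card ↥(Hsub C ⊓ fixingSubgroup (Perm _) (σ '' {ω : Fin k × ZMod p | ω.1 ∈ I})) :=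
          (Subgroup.natCard_inf_fixingSubgroup_image (Subgroup.map_conj_eq_of_image_eq hσ) _).symm
      _ = Nat.card (LinearMap.ker (fJ.domRestrict C)) := by
          rw [hIJ, natCard_ker_domRestrict_funLeft C J]
  have hrnI := Submodule.finrank_map_add_finrank_ker_domRestrict C fI
  have hrnJ := Submodule.finrank_map_add_finrank_ker_domRestrict C fJ
  omega
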